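/- With F and F* as in Theorem 1 of the paper: if η(1 + iα + jβ) = η(1 + iα) for all i, j ∈ F_p, then for all b_1, b_2 ∈ F_p, Σ_{y_1, y_2 ∈ F_p} η(1 + y_1 α + y_2 β) ζ_{p^k}^{g(y_1)} ζ_p^{−y_1 y_2 + b_1 y_1 + b_2 y_2} = η(1 + b_2 α) p ζ_p^{b_1 b_2} ζ_{p^k}^{g(b_2)}, and hence F* is generalized bent. If moreover there exist i_1, i_2 ∈ F_p with η(1 + i_1 α) ≠ η(1 + i_2 α), then F* is non-weakly regular. -/

import Mathlib

/-!
Write `δ = 1 + y₁α + y₂β` and `ψ = ζ_p^{Tr(·)}`. In the Walsh transform of `F*` the sum over `x`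
is a quadratic Gauss sum: completing the square gives `η(-δ) ψ(δa²) G` with `|G| = p^{m/2}`. What
is left is the sum `Σ η(δ) ζ_{p^k}^{g(y₁)} ζ_p^{-y₁y₂ + b₁y₁ + b₂y₂}`; when `η(δ)` does not depend
on `y₂`, orthogonality in `y₂` collapses it to the single term `y₁ = b₂`, of modulus `p`.

The Walsh value at `(0, 0, -i)` is `η(-1) G p · η(1 + iα) ζ_{p^k}^{g(i)}`. If `F*` were weakly
regular, the quotient of two such values would be a `p^k`-th root of unity, so
`η(1 + i₁α) / η(1 + i₂α) = -1` would be one too, which is impossible since `p^k` is odd.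
-/

open Finset

/-- `chr m z = ζ_m ^ z`, the additive character sending `z ∈ ℤ/m` to `e^{2πi z/m}`. -/
noncomputable def chr (m : ℕ) (z : ZMod m) : ℂ :=
  Complex.exp (2 * Real.pi * Complex.I * (z.val : ℂ) / (m : ℂ))

/-- The lift `ℤ/p → ℤ/p^k`, `z ↦ p^{k-1} z`. -/
def lift (p k : ℕ) (z : ZMod p) : ZMod (p ^ k) :=
  (p ^ (k - 1) : ZMod (p ^ k)) * (z.val : ZMod (p ^ k))

/-- Walsh transform of a generalized function on `F_{p^m} × F_p × F_p`, where the
inner product is `⟨(a,b₁,b₂),(x,y₁,y₂)⟩ = Tr(ax) + b₁y₁ + b₂y₂`. -/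
noncomputable def walshF (p k : ℕ) [NeZero p] (F : Type*) [Field F] [Fintype F]
    [Algebra (ZMod p) F] (f : F → ZMod p → ZMod p → ZMod (p ^ k))
    (a : F) (b₁ b₂ : ZMod p) : ℂ :=
  ∑ x : F, ∑ y₁ : ZMod p, ∑ y₂ : ZMod p,
    chr (p ^ k) (f x y₁ y₂) *
      chr p (-(Algebra.trace (ZMod p) F (a * x) + b₁ * y₁ + b₂ * y₂))

section Chr

variable {n : ℕ} [NeZero n]

lemma chr_eq_stdAddChar (z : ZMod n) : chr n z = ZMod.stdAddChar z := by
  rw [chr, ZMod.stdAddChar_apply, ZMod.toCircle_apply]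

lemma chr_add (a b : ZMod n) : chr n (a + b) = chr n a * chr n b := by
  simp only [chr_eq_stdAddChar, AddChar.map_add_eq_mul]

lemma chr_zero : chr n 0 = 1 := by
  rw [chr_eq_stdAddChar, AddChar.map_zero_eq_one]

lemma norm_chr (z : ZMod n) : ‖chr n z‖ = 1 := by
  rw [chr_eq_stdAddChar, ZMod.stdAddChar_apply, Circle.norm_coe]

lemma chr_pow_self (z : ZMod n) : chr n z ^ n = 1 := by
  rw [chr_eq_stdAddChar, ← AddChar.map_nsmul_eq_pow, nsmul_eq_mul, ZMod.natCast_self, zero_mul,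
    AddChar.map_zero_eq_one]

lemma sum_chr_mul (c : ZMod n) : ∑ y : ZMod n, chr n (y * c) = if c = 0 then (n : ℂ) else 0 := by
  simp only [chr_eq_stdAddChar, AddChar.sum_mulShift c (ZMod.isPrimitive_stdAddChar n), ZMod.card,
    Nat.cast_ite, Nat.cast_zero]

lemma sum_sum_mul_chr (w : ZMod n → ℂ) (b₁ b₂ : ZMod n) :
    ∑ y₁ : ZMod n, ∑ y₂ : ZMod n, w y₁ * chr n (-(y₁ * y₂) + b₁ * y₁ + b₂ * y₂) =
      n * chr n (b₁ * b₂) * w b₂ := by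
  have inner (y₁ : ZMod n) : ∑ y₂ : ZMod n, w y₁ * chr n (-(y₁ * y₂) + b₁ * y₁ + b₂ * y₂) =
      if b₂ = y₁ then n * chr n (b₁ * b₂) * w b₂ else 0 := by
    simp_rw [show ∀ y₂, -(y₁ * y₂) + b₁ * y₁ + b₂ * y₂ = b₁ * y₁ + y₂ * (b₂ - y₁) by
      intro y₂; ring, chr_add, ← mul_sum, sum_chr_mul, sub_eq_zero]
    split_ifs with h
    · subst h; ring
    · simp
  simp_rw [inner, sum_ite_eq, mem_univ, if_true]

end Chr

lemma chr_lift {p k : ℕ} [NeZero p] (hk : 1 ≤ k) (z : ZMod p) :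
    chr (p ^ k) (lift p k z) = chr p z := by
  obtain ⟨j, rfl⟩ := Nat.exists_eq_add_of_le' hk
  have hlift : lift p (j + 1) z = ((p ^ j * z.val : ℤ) : ZMod (p ^ (j + 1))) := by
    simp [lift]
  have hz : z = ((z.val : ℤ) : ZMod p) := by simp
  rw [hlift, chr_eq_stdAddChar, chr_eq_stdAddChar, ZMod.stdAddChar_coe]
  conv_rhs => rw [hz, ZMod.stdAddChar_coe]
  have hp : (p : ℂ) ≠ 0 := Nat.cast_ne_zero.mpr (NeZero.ne p)
  congr 1
  push_cast
  field_simp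
  ring

lemma sign_eq_of_forall_mul_chr_eq {ι : Type*} {n : ℕ} [NeZero n] (hn : Odd n) {K c : ℂ}
    (hK : K ≠ 0) {e : ι → ℤ} (he : ∀ i, e i = 1 ∨ e i = -1) {u v : ι → ZMod n}
    (h : ∀ i, K * e i * chr n (u i) = c * chr n (v i)) (i j : ι) : e i = e j := by
  have hij : (e i : ℂ) * chr n (u i + v j) = e j * chr n (u j + v i) := by
    refine mul_left_cancel₀ hK ?_
    rw [chr_add, chr_add]
    linear_combination chr n (v j) * h i - chr n (v i) * h j
  have hpow := congrArg (· ^ n) hij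
  simp only [mul_pow, chr_pow_self, mul_one] at hpow
  rcases he i with hi | hi <;> rcases he j with hj | hj <;>
    simp [hi, hj, hn.neg_one_pow] at hpow ⊢ <;> norm_num at hpow

lemma four_ne_zero_of_ringChar_ne_two {F : Type*} [Field F] (hF : ringChar F ≠ 2) :
    (4 : F) ≠ 0 := by
  rw [show (4 : F) = 2 ^ 2 by norm_num]
  exact pow_ne_zero 2 (Ring.two_ne_zero hF)

lemma norm_gaussSum {F : Type*} [Field F] [Fintype F] {χ : MulChar F ℂ} (hχ : χ ≠ 1)
    {ψ : AddChar F ℂ} (hψ : ψ.IsPrimitive) : ‖gaussSum χ ψ‖ = √(Fintype.card F) := by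
  have h := gaussSum_mul_gaussSum_eq_card hχ hψ
  rw [← star_gaussSum_eq, Complex.star_def, Complex.mul_conj'] at h
  rw [← Real.sqrt_sq (norm_nonneg _)]
  exact_mod_cast congrArg Real.sqrt (Complex.ofReal_injective (by push_cast; exact h))

section QuadraticSum

variable {F : Type*} [Field F] [Fintype F] [DecidableEq F] {R : Type*} [CommRing R]

variable (F R) in
def quadraticCharTo : MulChar F R := (quadraticChar F).ringHomComp (Int.castRingHom R)

lemma quadraticCharTo_apply (x : F) : quadraticCharTo F R x = quadraticChar F x := rfl

lemma quadraticCharTo_mul_self {x : F} (hx : x ≠ 0) :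
    quadraticCharTo F R x * quadraticCharTo F R x = 1 := by
  rw [quadraticCharTo_apply, ← Int.cast_mul, ← sq, quadraticChar_sq_one hx, Int.cast_one]

lemma quadraticCharTo_neg_inv_four_mul (hF : ringChar F ≠ 2) {δ : F} (hδ : δ ≠ 0) :
    quadraticCharTo F R (-(4 * δ)⁻¹) = quadraticCharTo F R (-1) * quadraticCharTo F R δ := by
  have h2 : (2 : F) ≠ 0 := Ring.two_ne_zero hF
  have h4 : (4 : F) ≠ 0 := four_ne_zero_of_ringChar_ne_two hF
  have hsq : -(4 * δ)⁻¹ = -1 * δ * ((2 * δ)⁻¹) ^ 2 := by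
    field_simp
    ring
  rw [hsq, map_mul, map_mul, quadraticCharTo_apply ((2 * δ)⁻¹ ^ 2),
    quadraticChar_sq_one' (inv_ne_zero (mul_ne_zero h2 hδ)), Int.cast_one, mul_one]

lemma quadraticCharTo_ne_zero [CharZero R] {x : F} (hx : x ≠ 0) : quadraticCharTo F R x ≠ 0 := by
  rwa [quadraticCharTo_apply, Int.cast_ne_zero, Ne, quadraticChar_eq_zero_iff]

lemma norm_quadraticCharTo {x : F} (hx : x ≠ 0) : ‖quadraticCharTo F ℂ x‖ = 1 := by
  rcases quadraticChar_dichotomy hx with h | h <;> simp [quadraticCharTo_apply, h]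

lemma quadraticCharTo_ne_one [CharZero R] (hF : ringChar F ≠ 2) : quadraticCharTo F R ≠ 1 :=
  fun h => quadraticChar_ne_one hF ((MulChar.ringHomComp_eq_one_iff Int.cast_injective).mp h)

lemma sum_addChar_mul_sq [IsDomain R] (hF : ringChar F ≠ 2) {ψ : AddChar F R} (hψ : ψ ≠ 1)
    {c : F} (hc : c ≠ 0) :
    ∑ x : F, ψ (c * x ^ 2) = quadraticCharTo F R c * gaussSum (quadraticCharTo F R) ψ := by
  have card_sqrts (t : F) : (#{x : F | x ^ 2 = t} : R) = quadraticCharTo F R t + 1 := by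
    rw [quadraticCharTo_apply, ← Int.cast_one, ← Int.cast_add, ← quadraticChar_card_sqrts hF t,
      Set.toFinset_ofPred, Int.cast_natCast]
  have hmulShift : gaussSum (quadraticCharTo F R) (ψ.mulShift c) =
      quadraticCharTo F R c * gaussSum (quadraticCharTo F R) ψ := by
    rw [← gaussSum_mulShift _ ψ (Units.mk0 c hc), Units.val_mk0, ← mul_assoc,
      quadraticCharTo_mul_self hc, one_mul]
  calc ∑ x : F, ψ (c * x ^ 2)
      = ∑ t : F, (#{x : F | x ^ 2 = t} : R) * ψ (c * t) := by
        rw [← sum_fiberwise' univ (fun x : F => x ^ 2) fun t => ψ (c * t)]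
        simp_rw [sum_const, nsmul_eq_mul]
    _ = gaussSum (quadraticCharTo F R) (ψ.mulShift c) + ∑ t : F, ψ.mulShift c t := by
        simp_rw [card_sqrts, add_mul, one_mul, sum_add_distrib, gaussSum, AddChar.mulShift_apply]
    _ = quadraticCharTo F R c * gaussSum (quadraticCharTo F R) ψ := by
        rw [hmulShift, AddChar.sum_eq_zero_of_ne_one (AddChar.IsPrimitive.of_ne_one hψ hc),
          add_zero]

lemma sum_addChar_mul_sq_add_mul [IsDomain R] (hF : ringChar F ≠ 2) {ψ : AddChar F R}
    (hψ : ψ ≠ 1) {c : F} (hc : c ≠ 0) (b : F) :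
    ∑ x : F, ψ (c * x ^ 2 + b * x) =
      quadraticCharTo F R c * ψ (-b ^ 2 / (4 * c)) * gaussSum (quadraticCharTo F R) ψ := by
  have h2 : (2 : F) ≠ 0 := Ring.two_ne_zero hF
  have h4 : (4 : F) ≠ 0 := four_ne_zero_of_ringChar_ne_two hF
  have complete_sq (x : F) :
      c * x ^ 2 + b * x = c * (x + b / (2 * c)) ^ 2 + -b ^ 2 / (4 * c) := by
    field_simp
    ring
  simp_rw [complete_sq, AddChar.map_add_eq_mul, ← sum_mul]
  rw [Fintype.sum_equiv (Equiv.addRight (b / (2 * c))) (fun x => ψ (c * (x + b / (2 * c)) ^ 2))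
      (fun u => ψ (c * u ^ 2)) fun _ => rfl, sum_addChar_mul_sq hF hψ hc]
  ring

end QuadraticSum

section TraceChar

variable (p : ℕ) [Fact p.Prime] (F : Type*) [Field F] [Algebra (ZMod p) F]

noncomputable def traceChar : AddChar F ℂ :=
  ZMod.stdAddChar.compAddMonoidHom (Algebra.trace (ZMod p) F).toAddMonoidHom

variable {p F}

lemma traceChar_apply (x : F) : traceChar p F x = chr p (Algebra.trace (ZMod p) F x) :=
  (chr_eq_stdAddChar _).symm

lemma traceChar_ne_one [Finite F] : traceChar p F ≠ 1 := by
  intro h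
  obtain ⟨x, hx⟩ : ∃ x : F, Algebra.trace (ZMod p) F x ≠ 0 := by
    simpa [DFunLike.ne_iff] using Algebra.trace_ne_zero (ZMod p) F
  refine hx (ZMod.injective_stdAddChar ?_)
  simpa [traceChar] using DFunLike.congr_fun h x

lemma isPrimitive_traceChar [Finite F] : (traceChar p F).IsPrimitive :=
  AddChar.IsPrimitive.of_ne_one traceChar_ne_one

lemma ringChar_eq_of_algebra_zmod : ringChar F = p :=
  have := charP_of_injective_algebraMap (algebraMap (ZMod p) F).injective p
  ringChar.eq F p

lemma ringChar_ne_two_of_odd (hp : Odd p) : ringChar F ≠ 2 := by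
  rw [ringChar_eq_of_algebra_zmod (p := p)]
  rintro rfl
  exact Nat.not_odd_iff_even.mpr even_two hp

end TraceChar

lemma trace_mul_sq_add {p : ℕ} {F : Type*} [Field F] [Algebra (ZMod p) F] (α β : F)
    (y₁ y₂ : ZMod p) (a : F) :
    Algebra.trace (ZMod p) F
        ((1 + algebraMap (ZMod p) F y₁ * α + algebraMap (ZMod p) F y₂ * β) * a ^ 2) =
      Algebra.trace (ZMod p) F (a ^ 2) + y₁ * Algebra.trace (ZMod p) F (α * a ^ 2) +
        y₂ * Algebra.trace (ZMod p) F (β * a ^ 2) := by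
  rw [← smul_eq_mul y₁, ← smul_eq_mul y₂, ← map_smul, ← map_smul, ← map_add, ← map_add,
    Algebra.smul_def, Algebra.smul_def]
  congr 1
  ring

section Dual

variable (p k : ℕ) [Fact p.Prime] {F : Type*} [Field F] [Algebra (ZMod p) F] (α β : F)
  (g : ZMod p → ZMod (p ^ k))

noncomputable def dualFun : F → ZMod p → ZMod p → ZMod (p ^ k) := fun x y₁ y₂ =>
  lift p k (Algebra.trace (ZMod p) F (-(x ^ 2) /
      (4 * (1 + algebraMap (ZMod p) F y₁ * α + algebraMap (ZMod p) F y₂ * β))) - y₁ * y₂) + g y₁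

variable [Fintype F] [DecidableEq F]

noncomputable def dualSum (b₁ b₂ : ZMod p) : ℂ :=
  ∑ y₁ : ZMod p, ∑ y₂ : ZMod p,
    (quadraticChar F (1 + algebraMap (ZMod p) F y₁ * α + algebraMap (ZMod p) F y₂ * β) : ℂ) *
      chr (p ^ k) (g y₁) * chr p (-(y₁ * y₂) + b₁ * y₁ + b₂ * y₂)

variable {p k α β}

lemma dualSum_eq (hη : ∀ i j : ZMod p,
      quadraticChar F (1 + algebraMap (ZMod p) F i * α + algebraMap (ZMod p) F j * β) =
        quadraticChar F (1 + algebraMap (ZMod p) F i * α)) (b₁ b₂ : ZMod p) :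
    dualSum p k α β g b₁ b₂ =
      (quadraticChar F (1 + algebraMap (ZMod p) F b₂ * α) : ℂ) * p *
        chr p (b₁ * b₂) * chr (p ^ k) (g b₂) := by
  simp_rw [dualSum, hη, sum_sum_mul_chr
    (fun y => (quadraticChar F (1 + algebraMap (ZMod p) F y * α) : ℂ) * chr (p ^ k) (g y))]
  ring

lemma sum_chr_dualFun_mul (hk : 1 ≤ k) (hF : ringChar F ≠ 2) {y₁ y₂ : ZMod p}
    (hδ : 1 + algebraMap (ZMod p) F y₁ * α + algebraMap (ZMod p) F y₂ * β ≠ 0) (a : F)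
    (b₁ b₂ : ZMod p) :
    ∑ x : F, chr (p ^ k) (dualFun p k α β g x y₁ y₂) *
        chr p (-(Algebra.trace (ZMod p) F (a * x) + b₁ * y₁ + b₂ * y₂)) =
      quadraticCharTo F ℂ (-1) * gaussSum (quadraticCharTo F ℂ) (traceChar p F) *
        chr p (Algebra.trace (ZMod p) F (a ^ 2)) *
        ((quadraticChar F (1 + algebraMap (ZMod p) F y₁ * α + algebraMap (ZMod p) F y₂ * β) : ℂ) *
          chr (p ^ k) (g y₁) *
          chr p (-(y₁ * y₂) + (Algebra.trace (ZMod p) F (α * a ^ 2) - b₁) * y₁ +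
            (Algebra.trace (ZMod p) F (β * a ^ 2) - b₂) * y₂)) := by
  set δ := 1 + algebraMap (ZMod p) F y₁ * α + algebraMap (ZMod p) F y₂ * β with hδdef
  set T := Algebra.trace (ZMod p) F
  have summand (x : F) : chr (p ^ k) (dualFun p k α β g x y₁ y₂) *
      chr p (-(Algebra.trace (ZMod p) F (a * x) + b₁ * y₁ + b₂ * y₂)) =
      traceChar p F (-(4 * δ)⁻¹ * x ^ 2 + -a * x) *
        (chr (p ^ k) (g y₁) * chr p (-(y₁ * y₂) - b₁ * y₁ - b₂ * y₂)) := by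
    have hexp : T (-x ^ 2 / (4 * δ)) - y₁ * y₂ + -(T (a * x) + b₁ * y₁ + b₂ * y₂) =
        T (-(4 * δ)⁻¹ * x ^ 2 + -a * x) + (-(y₁ * y₂) - b₁ * y₁ - b₂ * y₂) := by
      rw [show -x ^ 2 / (4 * δ) = -(4 * δ)⁻¹ * x ^ 2 by ring]
      simp only [map_add, neg_mul, map_neg]
      ring
    rw [dualFun, ← hδdef, chr_add, chr_lift hk, traceChar_apply, mul_right_comm, ← chr_add, hexp,
      chr_add]
    ring
  rw [sum_congr rfl fun x _ => summand x, ← sum_mul, sum_addChar_mul_sq_add_mul hF traceChar_ne_one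
      (neg_ne_zero.mpr (inv_ne_zero (mul_ne_zero (four_ne_zero_of_ringChar_ne_two hF) hδ))),
    quadraticCharTo_neg_inv_four_mul hF hδ]
  have hvertex : -(-a) ^ 2 / (4 * -(4 * δ)⁻¹) = δ * a ^ 2 := by
    field_simp [four_ne_zero_of_ringChar_ne_two hF]
  have hchr : chr p (T (δ * a ^ 2)) * chr p (-(y₁ * y₂) - b₁ * y₁ - b₂ * y₂) =
      chr p (T (a ^ 2)) *
        chr p (-(y₁ * y₂) + (T (α * a ^ 2) - b₁) * y₁ + (T (β * a ^ 2) - b₂) * y₂) := by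
    rw [← chr_add, ← chr_add, trace_mul_sq_add]
    congr 1
    ring
  rw [hvertex, traceChar_apply, quadraticCharTo_apply δ]
  linear_combination (quadraticCharTo F ℂ (-1) * quadraticChar F δ *
    gaussSum (quadraticCharTo F ℂ) (traceChar p F) * chr (p ^ k) (g y₁)) * hchr

lemma walshF_dualFun (hk : 1 ≤ k) (hF : ringChar F ≠ 2)
    (hδ : ∀ i j : ZMod p, 1 + algebraMap (ZMod p) F i * α + algebraMap (ZMod p) F j * β ≠ 0)
    (a : F) (b₁ b₂ : ZMod p) :
    walshF p k F (dualFun p k α β g) a b₁ b₂ =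
      quadraticCharTo F ℂ (-1) * gaussSum (quadraticCharTo F ℂ) (traceChar p F) *
        chr p (Algebra.trace (ZMod p) F (a ^ 2)) *
        dualSum p k α β g (Algebra.trace (ZMod p) F (α * a ^ 2) - b₁)
          (Algebra.trace (ZMod p) F (β * a ^ 2) - b₂) := by
  rw [walshF, sum_comm, dualSum, mul_sum]
  refine sum_congr rfl fun y₁ _ => ?_
  rw [sum_comm, mul_sum]
  exact sum_congr rfl fun y₂ _ => sum_chr_dualFun_mul g hk hF (hδ y₁ y₂) a b₁ b₂

lemma norm_walshF_dualFun (hk : 1 ≤ k) (hF : ringChar F ≠ 2)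
    (hδ : ∀ i j : ZMod p, 1 + algebraMap (ZMod p) F i * α + algebraMap (ZMod p) F j * β ≠ 0)
    (hη : ∀ i j : ZMod p,
      quadraticChar F (1 + algebraMap (ZMod p) F i * α + algebraMap (ZMod p) F j * β) =
        quadraticChar F (1 + algebraMap (ZMod p) F i * α))
    (a : F) (b₁ b₂ : ZMod p) :
    ‖walshF p k F (dualFun p k α β g) a b₁ b₂‖ = √(Fintype.card F) * p := by
  have hne (i : ZMod p) : 1 + algebraMap (ZMod p) F i * α ≠ 0 := by simpa using hδ i 0
  rw [walshF_dualFun g hk hF hδ, dualSum_eq g hη]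
  simp only [norm_mul, norm_chr, ← quadraticCharTo_apply, norm_quadraticCharTo (hne _),
    norm_quadraticCharTo (neg_ne_zero.mpr (one_ne_zero (α := F))), Complex.norm_natCast,
    norm_gaussSum (quadraticCharTo_ne_one hF) isPrimitive_traceChar]
  ring

lemma walshF_dualFun_zero_zero_neg (hk : 1 ≤ k) (hF : ringChar F ≠ 2)
    (hδ : ∀ i j : ZMod p, 1 + algebraMap (ZMod p) F i * α + algebraMap (ZMod p) F j * β ≠ 0)
    (hη : ∀ i j : ZMod p,
      quadraticChar F (1 + algebraMap (ZMod p) F i * α + algebraMap (ZMod p) F j * β) =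
        quadraticChar F (1 + algebraMap (ZMod p) F i * α))
    (i : ZMod p) :
    walshF p k F (dualFun p k α β g) 0 0 (-i) =
      quadraticCharTo F ℂ (-1) * gaussSum (quadraticCharTo F ℂ) (traceChar p F) * p *
        quadraticChar F (1 + algebraMap (ZMod p) F i * α) * chr (p ^ k) (g i) := by
  rw [walshF_dualFun g hk hF hδ, dualSum_eq g hη]
  simp only [ne_eq, OfNat.ofNat_ne_zero, not_false_eq_true, zero_pow, mul_zero, map_zero,
    sub_self, sub_neg_eq_add, zero_add, zero_mul, chr_zero]
  ring

end Dual

theorem stmt_17_general (p k m : ℕ) [NeZero p] [Fact p.Prime] (hodd : Odd p) (hk : 1 ≤ k)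
    (F : Type*) [Field F] [Fintype F] [DecidableEq F] [Algebra (ZMod p) F]
    (hF : Fintype.card F = p ^ m)
    (α β : F)
    (hαβ : ∀ i j : ZMod p,
      1 + algebraMap (ZMod p) F i * α + algebraMap (ZMod p) F j * β ≠ 0)
    (g : ZMod p → ZMod (p ^ k))
    (hη : ∀ i j : ZMod p,
      quadraticChar F (1 + algebraMap (ZMod p) F i * α + algebraMap (ZMod p) F j * β) =
        quadraticChar F (1 + algebraMap (ZMod p) F i * α)) :
    (∀ b₁ b₂ : ZMod p,
      (∑ y₁ : ZMod p, ∑ y₂ : ZMod p,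
        (quadraticChar F (1 + algebraMap (ZMod p) F y₁ * α + algebraMap (ZMod p) F y₂ * β) : ℂ) *
          chr (p ^ k) (g y₁) * chr p (-(y₁ * y₂) + b₁ * y₁ + b₂ * y₂)) =
      (quadraticChar F (1 + algebraMap (ZMod p) F b₂ * α) : ℂ) * p *
        chr p (b₁ * b₂) * chr (p ^ k) (g b₂)) ∧
    (∀ (a : F) (b₁ b₂ : ZMod p),
      ‖(walshF p k F (fun x y₁ y₂ =>
          lift p k (Algebra.trace (ZMod p) F (-(x ^ 2) /
              (4 * (1 + algebraMap (ZMod p) F y₁ * α + algebraMap (ZMod p) F y₂ * β)))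
            - y₁ * y₂) + g y₁) a b₁ b₂)‖ = Real.sqrt ((p : ℝ) ^ m) * p) ∧
    ((∃ i₁ i₂ : ZMod p,
        quadraticChar F (1 + algebraMap (ZMod p) F i₁ * α) ≠
          quadraticChar F (1 + algebraMap (ZMod p) F i₂ * α)) →
      ¬ ∃ (c : ℂ) (Fss : F → ZMod p → ZMod p → ZMod (p ^ k)),
        ∀ (a : F) (b₁ b₂ : ZMod p),
          walshF p k F (fun x y₁ y₂ =>
              lift p k (Algebra.trace (ZMod p) F (-(x ^ 2) /
                  (4 * (1 + algebraMap (ZMod p) F y₁ * α + algebraMap (ZMod p) F y₂ * β)))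
                - y₁ * y₂) + g y₁) a b₁ b₂ =
            c * ((Real.sqrt ((p : ℝ) ^ m) : ℂ) * p) * chr (p ^ k) (Fss a b₁ b₂)) := by
  have hF2 : ringChar F ≠ 2 := ringChar_ne_two_of_odd hodd
  have hne (i : ZMod p) : 1 + algebraMap (ZMod p) F i * α ≠ 0 := by simpa using hαβ i 0
  refine ⟨dualSum_eq g hη, fun a b₁ b₂ => ?_, ?_⟩
  · rw [← Nat.cast_pow, ← hF]
    exact norm_walshF_dualFun g hk hF2 hαβ hη a b₁ b₂
  · rintro ⟨i₁, i₂, hi⟩ ⟨c, Fss, hreg⟩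
    have hK : quadraticCharTo F ℂ (-1) * gaussSum (quadraticCharTo F ℂ) (traceChar p F) * p ≠ 0 :=
      mul_ne_zero (mul_ne_zero (quadraticCharTo_ne_zero (neg_ne_zero.mpr one_ne_zero))
        (gaussSum_ne_zero_of_nontrivial (by simp) (quadraticCharTo_ne_one hF2)
          isPrimitive_traceChar)) (Nat.cast_ne_zero.mpr (NeZero.ne p))
    have hW (i : ZMod p) :
        quadraticCharTo F ℂ (-1) * gaussSum (quadraticCharTo F ℂ) (traceChar p F) * p *
            quadraticChar F (1 + algebraMap (ZMod p) F i * α) * chr (p ^ k) (g i) =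
          c * (√((p : ℝ) ^ m) * p) * chr (p ^ k) (Fss 0 0 (-i)) := by
      rw [← walshF_dualFun_zero_zero_neg g hk hF2 hαβ hη]
      exact hreg 0 0 (-i)
    exact hi (sign_eq_of_forall_mul_chr_eq hodd.pow hK (fun i => quadraticChar_dichotomy (hne i))
      hW i₁ i₂)

theorem stmt_17 (p k m : ℕ) [NeZero p] [Fact p.Prime] (hodd : Odd p) (hk : 1 ≤ k) (hm : 2 ≤ m)
    (F : Type*) [Field F] [Fintype F] [DecidableEq F] [Algebra (ZMod p) F]
    (hF : Fintype.card F = p ^ m)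
    (α β : F) (hα : α ≠ 0) (hβ : β ≠ 0)
    (hαβ : ∀ i j : ZMod p,
      1 + algebraMap (ZMod p) F i * α + algebraMap (ZMod p) F j * β ≠ 0)
    (g : ZMod p → ZMod (p ^ k))
    (hη : ∀ i j : ZMod p,
      quadraticChar F (1 + algebraMap (ZMod p) F i * α + algebraMap (ZMod p) F j * β) =
        quadraticChar F (1 + algebraMap (ZMod p) F i * α)) :
    (∀ b₁ b₂ : ZMod p,
      (∑ y₁ : ZMod p, ∑ y₂ : ZMod p,
        (quadraticChar F (1 + algebraMap (ZMod p) F y₁ * α + algebraMap (ZMod p) F y₂ * β) : ℂ) *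
          chr (p ^ k) (g y₁) * chr p (-(y₁ * y₂) + b₁ * y₁ + b₂ * y₂)) =
      (quadraticChar F (1 + algebraMap (ZMod p) F b₂ * α) : ℂ) * p *
        chr p (b₁ * b₂) * chr (p ^ k) (g b₂)) ∧
    (∀ (a : F) (b₁ b₂ : ZMod p),
      ‖(walshF p k F (fun x y₁ y₂ =>
          lift p k (Algebra.trace (ZMod p) F (-(x ^ 2) /
              (4 * (1 + algebraMap (ZMod p) F y₁ * α + algebraMap (ZMod p) F y₂ * β)))
            - y₁ * y₂) + g y₁) a b₁ b₂)‖ = Real.sqrt ((p : ℝ) ^ m) * p) ∧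
    ((∃ i₁ i₂ : ZMod p,
        quadraticChar F (1 + algebraMap (ZMod p) F i₁ * α) ≠
          quadraticChar F (1 + algebraMap (ZMod p) F i₂ * α)) →
      ¬ ∃ (c : ℂ) (Fss : F → ZMod p → ZMod p → ZMod (p ^ k)),
        ∀ (a : F) (b₁ b₂ : ZMod p),
          walshF p k F (fun x y₁ y₂ =>
              lift p k (Algebra.trace (ZMod p) F (-(x ^ 2) /
                  (4 * (1 + algebraMap (ZMod p) F y₁ * α + algebraMap (ZMod p) F y₂ * β)))
                - y₁ * y₂) + g y₁) a b₁ b₂ =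
            c * ((Real.sqrt ((p : ℝ) ^ m) : ℂ) * p) * chr (p ^ k) (Fss a b₁ b₂)) :=
  stmt_17_general p k m hodd hk F hF α β hαβ g hη
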